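/- Let $A$ be a normal integral domain with fraction field inverting an element $s \in A$, and let $B$ be a normal $A$-algebra which is finite over $A$ such that $A[1/s] \to B[1/s]$ is finite étale and admits an $A[1/s]$-algebra section. Then the idempotent $e \in B[1/s]$ determined by the section actually lies in $B$, and $B \cong B' \times C$ with $A \subseteq B' \subseteq A[1/s]$, $B'$ finite over $A$; since $A$ is normal, $B' = A$. -/

import Mathlib

universe u

/-!
Through the perfect trace pairing the section `g` is `x ↦ Tr(e·x)` for some `e ∈ B[1/s]`.
Nondegeneracy forces `e·x = g(x)·e`, so multiplication by `e` has rank one and trace `g e`;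
as `Tr e = g 1 = 1`, this gives `g e = 1` and `e` is idempotent. Idempotents are integral, so
`e ∈ B` by normality of `B`. The composite `B → B[1/s] → A[1/s]` takes values integral over
`A`, which lie in `A` by normality of `A`; this is `f : B → A`, and `e·x = f(x)·e` makes
`x ↦ (f x, x mod e)` an isomorphism `B ≃ A × B/(e)`.
-/

open Polynomial in
theorem IsIdempotentElem.isIntegral {R S : Type*} [CommRing R] [Ring S] [Algebra R S] {e : S}
    (he : IsIdempotentElem e) : IsIntegral R e :=
  ⟨X * (X - C 1), monic_X.mul (monic_X_sub_C 1), by simp [mul_sub, he.eq]⟩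

namespace LinearMap

variable {R M : Type*} [CommRing R] [AddCommGroup M] [Module R M]

theorem exists_basis_of_trace_ne_zero {f : M →ₗ[R] M} (hf : trace R M f ≠ 0) :
    ∃ s : Finset M, Nonempty (Module.Basis s R M) := by
  classical
  by_contra H
  exact hf (by rw [trace, dif_neg H, zero_apply])

theorem trace_smulRight_of_basis {ι : Type*} [Finite ι] (b : Module.Basis ι R M)
    (φ : Module.Dual R M) (m : M) : trace R M (φ.smulRight m) = φ m := by
  change trace R M (dualTensorHom R M M (φ ⊗ₜ m)) = φ m
  rw [← comp_apply, trace_eq_contract_of_basis b, contractLeft_apply]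

end LinearMap

namespace Algebra

variable {R S : Type*} [CommRing R] [CommRing S] [Algebra R S] {g : S →ₐ[R] R} {e : S}

theorem mul_eq_smul_of_trace_mul_eq (hinj : Function.Injective (traceForm R S))
    (he : ∀ x, trace R S (e * x) = g x) (x : S) : e * x = g x • e := by
  refine hinj (LinearMap.ext fun z ↦ ?_)
  simp only [traceForm_apply, mul_assoc, he, map_mul, LinearMap.smul_apply,
    map_smul, smul_eq_mul]

theorem apply_eq_one_of_trace_mul_eq (hinj : Function.Injective (traceForm R S))
    (he : ∀ x, trace R S (e * x) = g x) : g e = 1 := by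
  nontriviality R
  have htrace : trace R S e = 1 := by simpa using he 1
  -- `LinearMap.trace` is zero on modules without a finite basis, so `Tr e = 1` provides one.
  obtain ⟨_, ⟨b⟩⟩ := LinearMap.exists_basis_of_trace_ne_zero (htrace ▸ one_ne_zero)
  have hlmul : lmul R S e = g.toLinearMap.smulRight e :=
    LinearMap.ext (mul_eq_smul_of_trace_mul_eq hinj he)
  rw [← htrace, trace_apply, hlmul, LinearMap.trace_smulRight_of_basis b,
    AlgHom.toLinearMap_apply]

theorem isIdempotentElem_of_trace_mul_eq (hinj : Function.Injective (traceForm R S))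
    (he : ∀ x, trace R S (e * x) = g x) : IsIdempotentElem e := by
  rw [IsIdempotentElem, mul_eq_smul_of_trace_mul_eq hinj he, apply_eq_one_of_trace_mul_eq hinj he,
    one_smul]

end Algebra

theorem IsIntegrallyClosed.mem_bot_of_isLocalization {A L : Type*} [CommRing A] [IsDomain A]
    [IsIntegrallyClosed A] [CommRing L] [Algebra A L] (M : Submonoid A)
    (hM : M ≤ nonZeroDivisors A) [IsLocalization M L] {x : L} (hx : IsIntegral A x) :
    x ∈ (⊥ : Subalgebra A L) := by
  let K := FractionRing A
  let j : L →+* K := IsLocalization.map K (T := nonZeroDivisors A) (RingHom.id A) hM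
  have hj : j.comp (algebraMap A L) = (algebraMap A K).comp (RingHom.id A) :=
    IsLocalization.map_comp hM
  have hj_inj : Function.Injective j := IsLocalization.map_injective_of_injective' M A
    (f := RingHom.id A) (Rₘ := L) K (N := nonZeroDivisors A) hM zero_notMem_nonZeroDivisors
    Function.injective_id
  obtain ⟨a, ha⟩ :=
    IsIntegrallyClosed.isIntegral_iff.mp (hx.map_of_comp_eq (RingHom.id A) j hj.symm)
  refine ⟨a, hj_inj ?_⟩
  rw [← ha]
  exact RingHom.congr_fun hj a

theorem IsIntegrallyClosed.exists_algHom_algebraMap_apply_eq {A B L : Type*} [CommRing A]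
    [IsDomain A] [IsIntegrallyClosed A] [CommRing B] [Algebra A B] [Algebra.IsIntegral A B]
    [CommRing L] [Algebra A L] (M : Submonoid A) (hM : M ≤ nonZeroDivisors A)
    [IsLocalization M L] (φ : B →ₐ[A] L) :
    ∃ f : B →ₐ[A] A, ∀ x, algebraMap A L (f x) = φ x := by
  let ψ := φ.codRestrict ⊥ fun x ↦
    mem_bot_of_isLocalization M hM ((Algebra.IsIntegral.isIntegral x).map φ)
  let bot := Algebra.botEquivOfInjective (IsLocalization.injective L hM)
  exact ⟨bot.toAlgHom.comp ψ, fun x ↦ congrArg Subtype.val (bot.symm_apply_apply (ψ x))⟩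

namespace AlgHom

variable {A B : Type*} [CommRing A] [CommRing B] [Algebra A B] {f : B →ₐ[A] A} {e : B}

theorem isIdempotentElem_of_mul_eq (hfe : f e = 1)
    (hmul : ∀ x, e * x = algebraMap A B (f x) * e) : IsIdempotentElem e := by
  rw [IsIdempotentElem, hmul, hfe, map_one, one_mul]

theorem injective_prod_mkₐ_span (hfe : f e = 1) (hmul : ∀ x, e * x = algebraMap A B (f x) * e) :
    Function.Injective (f.prod (Ideal.Quotient.mkₐ A (Ideal.span {e}))) := by
  rw [injective_iff_map_eq_zero]
  intro x hx
  obtain ⟨hfx, hxe⟩ := Prod.ext_iff.mp hx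
  obtain ⟨c, rfl⟩ := Ideal.mem_span_singleton.mp (Ideal.Quotient.eq_zero_iff_mem.mp hxe)
  calc e * c = e * (e * c) := by rw [← mul_assoc, (isIdempotentElem_of_mul_eq hfe hmul).eq]
    _ = 0 := by rw [hmul, show f (e * c) = 0 from hfx, map_zero, zero_mul]

theorem surjective_prod_mkₐ_span (hfe : f e = 1) :
    Function.Surjective (f.prod (Ideal.Quotient.mkₐ A (Ideal.span {e}))) := by
  rintro ⟨a, y⟩
  obtain ⟨y, rfl⟩ := Ideal.Quotient.mk_surjective y
  refine ⟨algebraMap A B a * e + y * (1 - e), Prod.ext ?_ ?_⟩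
  · simp [hfe]
  · refine Ideal.Quotient.eq.mpr (Ideal.mem_span_singleton.mpr ⟨algebraMap A B a - y, ?_⟩)
    ring

noncomputable def prodQuotientSpanEquiv (f : B →ₐ[A] A) (e : B) (hfe : f e = 1)
    (hmul : ∀ x, e * x = algebraMap A B (f x) * e) : B ≃ₐ[A] A × (B ⧸ Ideal.span {e}) :=
  AlgEquiv.ofBijective _ ⟨injective_prod_mkₐ_span hfe hmul, surjective_prod_mkₐ_span hfe⟩

end AlgHom

theorem stmt4_general (A : Type u) [CommRing A] [IsDomain A] [IsIntegrallyClosed A]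
    (B : Type u) [CommRing B] [Algebra A B] [Module.Finite A B]
    (s : A) (hs : s ≠ 0)
    (hreg : ∀ x : B, algebraMap A B s * x = 0 → x = 0)
    (As Bs : Type u) [CommRing As] [CommRing Bs]
    [Algebra A As] [IsLocalization.Away s As]
    [Algebra B Bs] [IsLocalization.Away (algebraMap A B s) Bs]
    [Algebra A Bs] [Algebra As Bs] [IsScalarTower A As Bs] [IsScalarTower A B Bs]
    (hperfect : Function.Bijective ⇑(Algebra.traceForm As Bs))
    (hnormalB : ∀ x : Bs, IsIntegral B x → x ∈ (algebraMap B Bs).range)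
    (g : Bs →ₐ[As] As) :
    ∃ e : B, IsIdempotentElem e ∧
      (∀ x : Bs, g x = Algebra.trace As Bs (algebraMap B Bs e * x)) ∧
      ∃ (C : Type u) (_ : CommRing C) (_ : Algebra A C),
        ∃ iso : B ≃ₐ[A] A × C,
          ∀ x : B, g (algebraMap B Bs x) = algebraMap A As ((iso x).1) := by
  have hsA : Submonoid.powers s ≤ nonZeroDivisors A :=
    powers_le_nonZeroDivisors_of_noZeroDivisors hs
  have hsB : Submonoid.powers (algebraMap A B s) ≤ nonZeroDivisors B :=
    Submonoid.powers_le.mpr (mem_nonZeroDivisors_iff_left.mpr hreg)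
  have hinjB : Function.Injective (algebraMap B Bs) := IsLocalization.injective Bs hsB
  obtain ⟨e, he⟩ := hperfect.2 g.toLinearMap
  replace he (x : Bs) : Algebra.trace As Bs (e * x) = g x := LinearMap.congr_fun he x
  obtain ⟨eB, rfl⟩ :=
    hnormalB e (Algebra.isIdempotentElem_of_trace_mul_eq hperfect.1 he).isIntegral
  obtain ⟨f, hf⟩ : ∃ f : B →ₐ[A] A, ∀ x, algebraMap A As (f x) = g (algebraMap B Bs x) :=
    IsIntegrallyClosed.exists_algHom_algebraMap_apply_eq _ hsA
      ((g.restrictScalars A).comp (IsScalarTower.toAlgHom A B Bs))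
  have hfe : f eB = 1 := IsLocalization.injective As hsA <| by
    rw [hf, map_one]
    exact Algebra.apply_eq_one_of_trace_mul_eq hperfect.1 he
  have hmul (x : B) : eB * x = algebraMap A B (f x) * eB := hinjB <| by
    rw [map_mul, map_mul, Algebra.mul_eq_smul_of_trace_mul_eq hperfect.1 he, ← hf,
      ← IsScalarTower.algebraMap_apply, IsScalarTower.algebraMap_apply A As Bs, Algebra.smul_def]
  refine ⟨eB, AlgHom.isIdempotentElem_of_mul_eq hfe hmul, fun x ↦ (he x).symm, _, _, _,
    AlgHom.prodQuotientSpanEquiv f eB hfe hmul, fun x ↦ (hf x).symm⟩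

/-- **Idempotents descend to the normal model.**  Let `A` be a normal (integrally
closed) domain, `s ∈ A` nonzero, and `B` a finite `A`-algebra, normal in the sense
that it is integrally closed in `Bs = B[1/s]`, with the image of `s` in `B` not a
zero divisor.  Assume `As = A[1/s] → Bs = B[1/s]` is finite étale (finite projective
with perfect trace pairing) and admits an `As`-algebra section `g`.  Then the
idempotent `e ∈ B[1/s]` determined by `g` (via `g x = Tr(e·x)`) lies in `B`, and
`B ≅ A × C` as `A`-algebras, compatibly with `g` (the factor `B'` with
`A ⊆ B' ⊆ A[1/s]` being equal to `A` by normality of `A`). -/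
theorem stmt4 (A : Type u) [CommRing A] [IsDomain A] [IsIntegrallyClosed A]
    (B : Type u) [CommRing B] [Algebra A B] [Module.Finite A B]
    (s : A) (hs : s ≠ 0)
    (hreg : ∀ x : B, algebraMap A B s * x = 0 → x = 0)
    (As Bs : Type u) [CommRing As] [CommRing Bs]
    [Algebra A As] [IsLocalization.Away s As]
    [Algebra B Bs] [IsLocalization.Away (algebraMap A B s) Bs]
    [Algebra A Bs] [Algebra As Bs] [IsScalarTower A As Bs] [IsScalarTower A B Bs]
    [Module.Finite As Bs] [Module.Projective As Bs]
    (hperfect : Function.Bijective ⇑(Algebra.traceForm As Bs))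
    (hnormalB : ∀ x : Bs, IsIntegral B x → x ∈ (algebraMap B Bs).range)
    (g : Bs →ₐ[As] As) :
    ∃ e : B, IsIdempotentElem e ∧
      (∀ x : Bs, g x = Algebra.trace As Bs (algebraMap B Bs e * x)) ∧
      ∃ (C : Type u) (_ : CommRing C) (_ : Algebra A C),
        ∃ iso : B ≃ₐ[A] A × C,
          ∀ x : B, g (algebraMap B Bs x) = algebraMap A As ((iso x).1) :=
  stmt4_general A B s hs hreg As Bs hperfect hnormalB g
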